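/- arXiv:2007.02738 — 3 statements merged into one kernel-verified Lean document; each statement's English description precedes it below -/
import Mathlib

section
/- Let $f : 2^L \to \mathbb{R}$ be a coverage function on a finite ground set $L$, i.e., $f(S) = |\bigcup_{u \in S} N(u)|$ for some assignment of finite sets $N(u)$. Let $T \subseteq L$ and let $T(p)$ be a random subset of $T$ in which each element of $T$ appears with probability at least $p$ (not necessarily independently). Then $\mathbb{E}[f(T(p))] \geq p \cdot f(T)$. -/
open Finset
open scoped Classical

theorem stmt10 {L R : Type*} [Fintype L] [Fintype R] [DecidableEq L] [DecidableEq R]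
    {Ω : Type*} [Fintype Ω] (μ : Ω → ℝ) (hμ0 : ∀ ω, 0 ≤ μ ω) (hμ1 : ∑ ω, μ ω = 1)
    (Ng : L → Finset R) (T : Finset L) (p : ℝ) (hp0 : 0 ≤ p) (hp1 : p ≤ 1)
    (Tp : Ω → Finset L) (hTp : ∀ ω, Tp ω ⊆ T)
    (hprob : ∀ u ∈ T, p ≤ ∑ ω ∈ Finset.univ.filter (fun ω => u ∈ Tp ω), μ ω) :
    p * (((T.biUnion Ng).card : ℝ)) ≤ ∑ ω, μ ω * (((Tp ω).biUnion Ng).card : ℝ) := by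
  set B := T.biUnion Ng with hB
  have covered : ∀ r ∈ B, p ≤ ∑ ω, μ ω * (if r ∈ (Tp ω).biUnion Ng then (1:ℝ) else 0) := by
    intro r hr
    obtain ⟨u, hu, hru⟩ := Finset.mem_biUnion.mp hr
    calc p ≤ ∑ ω ∈ Finset.univ.filter (fun ω => u ∈ Tp ω), μ ω := hprob u hu
    _ ≤ ∑ ω, μ ω * (if r ∈ (Tp ω).biUnion Ng then (1:ℝ) else 0) := by
        rw [Finset.sum_filter]
        apply Finset.sum_le_sum
        intro ω _
        by_cases h : u ∈ Tp ω
        · simp [h, Finset.mem_biUnion.mpr ⟨u, h, hru⟩]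
        · simp only [h, if_false]
          by_cases h2 : r ∈ (Tp ω).biUnion Ng
          · simp [h2, hμ0 ω]
          · simp [h2]
  calc p * ((B.card : ℝ)) = ∑ r ∈ B, p := by simp [mul_comm]
  _ ≤ ∑ r ∈ B, ∑ ω, μ ω * (if r ∈ (Tp ω).biUnion Ng then (1:ℝ) else 0) :=
      Finset.sum_le_sum covered
  _ = ∑ ω, μ ω * (((Tp ω).biUnion Ng).card : ℝ) := by
      rw [Finset.sum_comm]
      apply Finset.sum_congr rfl
      intro ω _
      rw [← Finset.mul_sum]
      congr 1
      rw [Finset.sum_boole]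
      congr 1
      rw [Finset.filter_mem_eq_inter]
      congr 1
      exact Finset.inter_eq_right.mpr <| Finset.biUnion_subset_biUnion_of_subset_left Ng (hTp ω)
end

section
/- Let $S_1, \dots, S_t$ be i.i.d. random subsets of a finite set $L$ drawn from a distribution $\mathcal{D}$, and let $u \in L$ with $p_u = \Pr_{S \sim \mathcal{D}}[u \in S] > 0$. Fix $v$ and suppose that for every single sample, $\Pr[v \in N_G(S) \wedge u \in S] \leq q_v \cdot \Pr[u \in S]$ where $q_v = \Pr[v \in N_G(S)]$. Define $N_{\tilde G}(u) = \bigcap_{i : u \in S_i} N_G(S_i)$ and $t_u = |\{i : u \in S_i\}|$. Then for every $\ell \in \mathbb{N}$, $\Pr[v \in N_{\tilde G}(u) \wedge t_u = \ell] \leq q_v^\ell \cdot \Pr[t_u = \ell]$. -/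
open Finset
open scoped Classical

lemma aux15 {L : Type*} [Fintype L] [DecidableEq L]
    (D : Finset L → ℝ) (u : L) (P : Finset L → Prop) [DecidablePred P] (t : ℕ) (A : Finset (Fin t)) :
    ∑ ω ∈ Finset.univ.filter (fun ω : Fin t → Finset L =>
        (∀ i, u ∈ ω i → P (ω i)) ∧ Finset.univ.filter (fun i => u ∈ ω i) = A),
      ∏ i, D (ω i)
    = (∑ S ∈ Finset.univ.filter (fun S : Finset L => u ∈ S ∧ P S), D S) ^ A.card *
      (∑ S ∈ Finset.univ.filter (fun S : Finset L => u ∉ S), D S) ^ (t - A.card) := by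
  classical
  have hset : Finset.univ.filter (fun ω : Fin t → Finset L =>
        (∀ i, u ∈ ω i → P (ω i)) ∧ Finset.univ.filter (fun i => u ∈ ω i) = A)
      = Fintype.piFinset (fun i => if i ∈ A then
          Finset.univ.filter (fun S : Finset L => u ∈ S ∧ P S)
        else Finset.univ.filter (fun S : Finset L => u ∉ S)) := by
    ext ω
    simp only [mem_filter, mem_univ, true_and, Fintype.mem_piFinset, Finset.ext_iff]
    constructor
    · rintro ⟨h1, h2⟩ i
      by_cases hi : i ∈ A
      · have := (h2 i).mpr hi
        simp [hi, this, h1 i this]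
      · have : ¬ u ∈ ω i := fun h => hi ((h2 i).mp (by simp [h]))
        simp [hi, this]
    · intro h
      constructor
      · intro i hi
        have := h i
        by_cases hA : i ∈ A
        · simp [hA] at this; exact this.2
        · simp [hA] at this; exact absurd hi this
      · intro i
        have := h i
        by_cases hA : i ∈ A
        · simp [hA] at this; simp [hA, this.1]
        · simp [hA] at this; simp [hA, this]
  rw [hset, ← Finset.prod_univ_sum]
  have : ∀ i : Fin t, (∑ S ∈ (if i ∈ A then
          Finset.univ.filter (fun S : Finset L => u ∈ S ∧ P S)
        else Finset.univ.filter (fun S : Finset L => u ∉ S)), D S)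
      = if i ∈ A then (∑ S ∈ Finset.univ.filter (fun S : Finset L => u ∈ S ∧ P S), D S)
        else (∑ S ∈ Finset.univ.filter (fun S : Finset L => u ∉ S), D S) := by
    intro i; split <;> rfl
  rw [Finset.prod_congr rfl (fun i _ => this i), Finset.prod_ite]
  simp only [Finset.prod_const]
  congr 1
  · congr 1; simp
  · congr 1
    have h2 : Finset.univ.filter (fun x : Fin t => ¬ x ∈ A) = Finset.univ \ A := by
      rw [Finset.filter_not]; congr 1; simp
    rw [h2, Finset.card_sdiff_of_subset (Finset.subset_univ A)]
    simp

lemma rep15 {L : Type*} [Fintype L] [DecidableEq L]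
    (D : Finset L → ℝ) (u : L) (P : Finset L → Prop) [DecidablePred P] (t ℓ : ℕ) :
    ∑ ω ∈ Finset.univ.filter (fun ω : Fin t → Finset L =>
        (∀ i, u ∈ ω i → P (ω i)) ∧ (Finset.univ.filter (fun i => u ∈ ω i)).card = ℓ),
      ∏ i, D (ω i)
    = ∑ _A ∈ Finset.univ.filter (fun A : Finset (Fin t) => A.card = ℓ),
        (∑ S ∈ Finset.univ.filter (fun S : Finset L => u ∈ S ∧ P S), D S) ^ ℓ *
        (∑ S ∈ Finset.univ.filter (fun S : Finset L => u ∉ S), D S) ^ (t - ℓ) := by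
  classical
  rw [← Finset.sum_fiberwise (Finset.univ.filter (fun ω : Fin t → Finset L =>
        (∀ i, u ∈ ω i → P (ω i)) ∧ (Finset.univ.filter (fun i => u ∈ ω i)).card = ℓ))
      (fun ω => Finset.univ.filter (fun i => u ∈ ω i)) (fun ω => ∏ i, D (ω i))]
  rw [← Finset.sum_filter_of_ne (p := fun A : Finset (Fin t) => A.card = ℓ)
    (by
      intro A _ hne
      by_contra hc
      apply hne
      apply Finset.sum_eq_zero
      intro ω hω
      simp only [Finset.mem_filter] at hω
      exact absurd (hω.2 ▸ hω.1.2.2) hc)]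
  apply Finset.sum_congr rfl
  intro A hA
  simp only [Finset.mem_filter, Finset.mem_univ, true_and] at hA
  rw [Finset.filter_filter]
  have hset : Finset.univ.filter (fun ω : Fin t → Finset L =>
      ((∀ i, u ∈ ω i → P (ω i)) ∧ (Finset.univ.filter (fun i => u ∈ ω i)).card = ℓ) ∧
        Finset.univ.filter (fun i => u ∈ ω i) = A)
      = Finset.univ.filter (fun ω : Fin t → Finset L =>
      (∀ i, u ∈ ω i → P (ω i)) ∧ Finset.univ.filter (fun i => u ∈ ω i) = A) := by
    ext ω
    simp only [Finset.mem_filter, Finset.mem_univ, true_and]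
    constructor
    · rintro ⟨⟨h1, _⟩, h3⟩; exact ⟨h1, h3⟩
    · rintro ⟨h1, h3⟩; exact ⟨⟨h1, h3 ▸ hA⟩, h3⟩
  rw [hset, aux15, hA]

theorem stmt15 {L R : Type*} [Fintype L] [Fintype R] [DecidableEq L] [DecidableEq R]
    (D : Finset L → ℝ) (hD0 : ∀ S, 0 ≤ D S) (hD1 : ∑ S : Finset L, D S = 1)
    (Ng : L → Finset R) (u : L) (v : R)
    (hpu : 0 < ∑ S ∈ Finset.univ.filter (fun S : Finset L => u ∈ S), D S)
    (hq : ∑ S ∈ Finset.univ.filter (fun S : Finset L => v ∈ S.biUnion Ng ∧ u ∈ S), D S ≤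
      (∑ S ∈ Finset.univ.filter (fun S : Finset L => v ∈ S.biUnion Ng), D S) *
        (∑ S ∈ Finset.univ.filter (fun S : Finset L => u ∈ S), D S))
    (t ℓ : ℕ) :
    ∑ ω ∈ Finset.univ.filter (fun ω : Fin t → Finset L =>
        (∀ i, u ∈ ω i → v ∈ (ω i).biUnion Ng) ∧
          (Finset.univ.filter (fun i => u ∈ ω i)).card = ℓ),
      ∏ i, D (ω i) ≤
    (∑ S ∈ Finset.univ.filter (fun S : Finset L => v ∈ S.biUnion Ng), D S) ^ ℓ *
      ∑ ω ∈ Finset.univ.filter (fun ω : Fin t → Finset L =>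
        (Finset.univ.filter (fun i => u ∈ ω i)).card = ℓ),
      ∏ i, D (ω i) := by
  classical
  have hbase : Finset.univ.filter (fun ω : Fin t → Finset L =>
      (Finset.univ.filter (fun i => u ∈ ω i)).card = ℓ)
      = Finset.univ.filter (fun ω : Fin t → Finset L =>
        (∀ i, u ∈ ω i → True) ∧ (Finset.univ.filter (fun i => u ∈ ω i)).card = ℓ) := by
    simp
  rw [hbase]
  have e1 := rep15 D u (fun S => v ∈ S.biUnion Ng) t ℓ
  have e2 := rep15 D u (fun _ => True) t ℓ
  rw [e1, e2, Finset.mul_sum]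
  apply Finset.sum_le_sum
  intro A _
  have hc0 : (0:ℝ) ≤ (∑ S ∈ Finset.univ.filter (fun S : Finset L => u ∉ S), D S) ^ (t - ℓ) :=
    pow_nonneg (Finset.sum_nonneg fun S _ => hD0 S) _
  have ha0 : (0:ℝ) ≤ ∑ S ∈ Finset.univ.filter
      (fun S : Finset L => u ∈ S ∧ v ∈ S.biUnion Ng), D S :=
    Finset.sum_nonneg fun S _ => hD0 S
  have hab : ∑ S ∈ Finset.univ.filter (fun S : Finset L => u ∈ S ∧ v ∈ S.biUnion Ng), D S ≤
      (∑ S ∈ Finset.univ.filter (fun S : Finset L => v ∈ S.biUnion Ng), D S) *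
        (∑ S ∈ Finset.univ.filter (fun S : Finset L => u ∈ S ∧ True), D S) := by
    have h1 : Finset.univ.filter (fun S : Finset L => u ∈ S ∧ v ∈ S.biUnion Ng)
        = Finset.univ.filter (fun S : Finset L => v ∈ S.biUnion Ng ∧ u ∈ S) := by
      ext S; simp [and_comm]
    have h2 : Finset.univ.filter (fun S : Finset L => u ∈ S ∧ True)
        = Finset.univ.filter (fun S : Finset L => u ∈ S) := by
      simp
    rw [h1, h2]; exact hq
  calc (∑ S ∈ Finset.univ.filter (fun S : Finset L => u ∈ S ∧ v ∈ S.biUnion Ng), D S) ^ ℓ *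
        (∑ S ∈ Finset.univ.filter (fun S : Finset L => u ∉ S), D S) ^ (t - ℓ)
      ≤ ((∑ S ∈ Finset.univ.filter (fun S : Finset L => v ∈ S.biUnion Ng), D S) *
          (∑ S ∈ Finset.univ.filter (fun S : Finset L => u ∈ S ∧ True), D S)) ^ ℓ *
        (∑ S ∈ Finset.univ.filter (fun S : Finset L => u ∉ S), D S) ^ (t - ℓ) :=
        mul_le_mul_of_nonneg_right (pow_le_pow_left₀ ha0 hab ℓ) hc0
    _ = _ := by ring
end

section
/- Let $G = (L, R, E)$ be a bipartite graph, $\mathcal{D}$ a distribution on subsets of $L$ such that the indicator variables $X_w = \mathbf{1}_{w \in S}$ (for $S \sim \mathcal{D}$) are negatively correlated. Then for any $u \in L$ and $v \in R$ with $(u,v) \notin E$, $\Pr_{S \sim \mathcal{D}}[v \in N_G(S) \wedge u \in S] \leq \Pr_{S \sim \mathcal{D}}[v \in N_G(S)] \cdot \Pr_{S \sim \mathcal{D}}[u \in S]$. -/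
open Finset
open scoped Classical

private lemma myProdIteZero {L : Type*} [DecidableEq L] (I S : Finset L) :
    (∏ i ∈ I, (if i ∈ S then (0:ℝ) else 1)) = if ∃ i ∈ I, i ∈ S then 0 else 1 := by
  by_cases h : ∃ i ∈ I, i ∈ S
  · obtain ⟨i, hi, his⟩ := h
    rw [if_pos ⟨i, hi, his⟩]
    exact Finset.prod_eq_zero hi (by simp [his])
  · rw [if_neg h]
    apply Finset.prod_eq_one
    intro i hi
    have : i ∉ S := fun hS => h ⟨i, hi, hS⟩
    simp [this]

theorem stmt16 {L R : Type*} [Fintype L] [Fintype R] [DecidableEq L] [DecidableEq R]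
    (D : Finset L → ℝ) (hD0 : ∀ S, 0 ≤ D S) (hD1 : ∑ S : Finset L, D S = 1)
    (Ng : L → Finset R)
    (hneg : ∀ I J : Finset L, Disjoint I J →
      ∑ S : Finset L, D S * ∏ i ∈ I ∪ J, (if i ∈ S then (0:ℝ) else 1) ≤
        (∑ S : Finset L, D S * ∏ i ∈ I, (if i ∈ S then (0:ℝ) else 1)) *
          (∑ S : Finset L, D S * ∏ j ∈ J, (if j ∈ S then (0:ℝ) else 1)))
    (u : L) (v : R) (huv : v ∉ Ng u) :
    ∑ S ∈ Finset.univ.filter (fun S : Finset L => v ∈ S.biUnion Ng ∧ u ∈ S), D S ≤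
      (∑ S ∈ Finset.univ.filter (fun S : Finset L => v ∈ S.biUnion Ng), D S) *
        (∑ S ∈ Finset.univ.filter (fun S : Finset L => u ∈ S), D S) := by
  set W : Finset L := Finset.univ.filter (fun w => v ∈ Ng w) with hW
  have hdisj : Disjoint W {u} := by
    simp only [Finset.disjoint_singleton_right, hW, Finset.mem_filter]
    tauto
  have key := hneg W {u} hdisj
  -- rewrite the three sums
  have hWmem : ∀ S : Finset L, (∃ i ∈ W, i ∈ S) ↔ v ∈ S.biUnion Ng := by
    intro S
    simp only [hW, Finset.mem_filter, Finset.mem_univ, true_and, Finset.mem_biUnion]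
    tauto
  have hUmem : ∀ S : Finset L, (∃ i ∈ W ∪ {u}, i ∈ S) ↔ (v ∈ S.biUnion Ng ∨ u ∈ S) := by
    intro S
    simp only [Finset.mem_union, Finset.mem_singleton]
    constructor
    · rintro ⟨i, hi | rfl, his⟩
      · exact Or.inl ((hWmem S).1 ⟨i, hi, his⟩)
      · exact Or.inr his
    · rintro (h | h)
      · obtain ⟨i, hi, his⟩ := (hWmem S).2 h
        exact ⟨i, Or.inl hi, his⟩
      · exact ⟨u, Or.inr rfl, h⟩
  set a := ∑ S ∈ Finset.univ.filter (fun S : Finset L => v ∈ S.biUnion Ng), D S with ha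
  set b := ∑ S ∈ Finset.univ.filter (fun S : Finset L => u ∈ S), D S with hb
  set c := ∑ S ∈ Finset.univ.filter (fun S : Finset L => v ∈ S.biUnion Ng ∧ u ∈ S), D S with hc
  have e1 : (∑ S : Finset L, D S * ∏ i ∈ W, (if i ∈ S then (0:ℝ) else 1)) = 1 - a := by
    have h' : (∑ S : Finset L, D S * ∏ i ∈ W, (if i ∈ S then (0:ℝ) else 1)) =
        ∑ S ∈ Finset.univ.filter (fun S : Finset L => ¬ v ∈ S.biUnion Ng), D S := by
      rw [Finset.sum_filter]
      apply Finset.sum_congr rfl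
      intro S _
      rw [myProdIteZero]
      by_cases h : v ∈ S.biUnion Ng
      · simp [h, (hWmem S).2 h]
      · have : ¬ ∃ i ∈ W, i ∈ S := fun hh => h ((hWmem S).1 hh)
        simp [h, this]
    have h2 : (∑ S ∈ Finset.univ.filter (fun S : Finset L => v ∈ S.biUnion Ng), D S) +
        ∑ S ∈ Finset.univ.filter (fun S : Finset L => ¬ v ∈ S.biUnion Ng), D S = 1 := by
      rw [Finset.sum_filter_add_sum_filter_not, hD1]
    rw [h', ha]
    linarith
  have e2 : (∑ S : Finset L, D S * ∏ i ∈ ({u} : Finset L), (if i ∈ S then (0:ℝ) else 1)) = 1 - b := by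
    have h' : (∑ S : Finset L, D S * ∏ i ∈ ({u} : Finset L), (if i ∈ S then (0:ℝ) else 1)) =
        ∑ S ∈ Finset.univ.filter (fun S : Finset L => ¬ u ∈ S), D S := by
      rw [Finset.sum_filter]
      apply Finset.sum_congr rfl
      intro S _
      rw [myProdIteZero]
      by_cases h : u ∈ S <;> simp [h]
    have h2 : (∑ S ∈ Finset.univ.filter (fun S : Finset L => u ∈ S), D S) +
        ∑ S ∈ Finset.univ.filter (fun S : Finset L => ¬ u ∈ S), D S = 1 := by
      rw [Finset.sum_filter_add_sum_filter_not, hD1]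
    rw [h', hb]
    linarith
  have hor : (∑ S ∈ Finset.univ.filter (fun S : Finset L => v ∈ S.biUnion Ng ∨ u ∈ S), D S) + c
      = a + b := by
    rw [ha, hb, hc]
    simp only [Finset.sum_filter]
    rw [← Finset.sum_add_distrib, ← Finset.sum_add_distrib]
    apply Finset.sum_congr rfl
    intro S _
    by_cases h1 : v ∈ S.biUnion Ng <;> by_cases h2 : u ∈ S <;> simp [h1, h2]
  have e3 : (∑ S : Finset L, D S * ∏ i ∈ W ∪ {u}, (if i ∈ S then (0:ℝ) else 1))
      = 1 - (a + b - c) := by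
    have h' : (∑ S : Finset L, D S * ∏ i ∈ W ∪ {u}, (if i ∈ S then (0:ℝ) else 1)) =
        ∑ S ∈ Finset.univ.filter (fun S : Finset L => ¬ (v ∈ S.biUnion Ng ∨ u ∈ S)), D S := by
      rw [Finset.sum_filter]
      apply Finset.sum_congr rfl
      intro S _
      rw [myProdIteZero]
      by_cases h : v ∈ S.biUnion Ng ∨ u ∈ S
      · rw [if_pos ((hUmem S).2 h), if_neg (not_not_intro h), mul_zero]
      · have hne : ¬ ∃ i ∈ W ∪ {u}, i ∈ S := fun hh => h ((hUmem S).1 hh)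
        rw [if_neg hne, if_pos h, mul_one]
    have h2 : (∑ S ∈ Finset.univ.filter (fun S : Finset L => v ∈ S.biUnion Ng ∨ u ∈ S), D S) +
        ∑ S ∈ Finset.univ.filter (fun S : Finset L => ¬ (v ∈ S.biUnion Ng ∨ u ∈ S)), D S = 1 := by
      rw [Finset.sum_filter_add_sum_filter_not, hD1]
    rw [h']
    linarith
  rw [e1, e2, e3] at key
  nlinarith [key]
end
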